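/- Lemma E.1 (bounded degree property after trimming): in the LSBM under (A1), in the regime p̄ = O(log n/n), n·p̄ → ∞, for any constant C > 0 there exists a constant c₁ > 0 such that, for all sufficiently large n, with probability at least 1 − exp(−C·n·p̄), every node v ∈ Γ satisfies e(v, I ∩ Γ) ≤ c₁·n·p̄. -/

import Mathlib

open Finset Filter Real Asymptotics

/-- Unordered pairs of distinct nodes, represented as ordered pairs `(v, w)` with `v < w`. -/
abbrev Pairs (n : ℕ) : Type := {q : Fin n × Fin n // q.1 < q.2}

/-- A configuration of the LSBM: the cluster assignment `σ` together with the label observed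
on each unordered pair of distinct nodes (labels in `{0, …, L}`). -/
abbrev Config (n K L : ℕ) : Type := (Fin n → Fin K) × (Pairs n → Fin (L + 1))

/-- The probability mass of a configuration: nodes get i.i.d. clusters with law `α`, and
conditionally on `σ` the pairs get independent labels with law `p (σ v) (σ w)`. -/
noncomputable def mass {n K L : ℕ} (α : Fin K → ℝ)
    (p : Fin K → Fin K → Fin (L + 1) → ℝ) (c : Config n K L) : ℝ :=
  (∏ v, α (c.1 v)) * ∏ q : Pairs n, p (c.1 q.1.1) (c.1 q.1.2) (c.2 q)

/-- Probability of a set of configurations under the LSBM law. -/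
noncomputable def Pr {n K L : ℕ} (α : Fin K → ℝ)
    (p : Fin K → Fin K → Fin (L + 1) → ℝ) (S : Set (Config n K L)) : ℝ :=
  ∑ c : Config n K L, Set.indicator S (mass α p) c

/-- Expectation of a function of the configuration under the LSBM law. -/
noncomputable def Ex {n K L : ℕ} (α : Fin K → ℝ)
    (p : Fin K → Fin K → Fin (L + 1) → ℝ) (f : Config n K L → ℝ) : ℝ :=
  ∑ c : Config n K L, mass α p c * f c

/-- `Aobs E ℓ v w = 1` iff the pair `{v, w}` (with `v ≠ w`) received the label `ℓ`. -/
def Aobs {n L : ℕ} (E : Pairs n → Fin (L + 1)) (ℓ : Fin (L + 1)) (v w : Fin n) : ℕ :=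
  if h : v < w then (if E ⟨(v, w), h⟩ = ℓ then 1 else 0)
  else if h' : w < v then (if E ⟨(w, v), h'⟩ = ℓ then 1 else 0) else 0

/-- `e(v, S, ℓ)`: the number of nodes `w ∈ S` such that the pair `{v, w}` has label `ℓ`. -/
def eCnt {n L : ℕ} (E : Pairs n → Fin (L + 1)) (v : Fin n) (S : Finset (Fin n))
    (ℓ : Fin (L + 1)) : ℕ :=
  ∑ w ∈ S, Aobs E ℓ v w

/-- `e(v, S) = Σ_{ℓ=1}^L e(v, S, ℓ)`. -/
def eTot {n L : ℕ} (E : Pairs n → Fin (L + 1)) (v : Fin n) (S : Finset (Fin n)) : ℕ :=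
  ∑ ℓ ∈ univ.filter (fun ℓ : Fin (L + 1) => ℓ ≠ 0), eCnt E v S ℓ

/-- The cluster `I_k = {v : σ(v) = k}`. -/
def clusterSet {n K : ℕ} (σ : Fin n → Fin K) (k : Fin K) : Finset (Fin n) :=
  univ.filter fun v => σ v = k

/-- The estimated label density `p̃ = (Σ_{ℓ=1}^L Σ_{v>w} A^ℓ_{vw})/(n(n−1))`. -/
noncomputable def ptilde {n L : ℕ} (E : Pairs n → Fin (L + 1)) : ℝ :=
  (∑ ℓ ∈ univ.filter (fun ℓ : Fin (L + 1) => ℓ ≠ 0),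
    ∑ q : Pairs n, (if E q = ℓ then (1 : ℝ) else 0)) / (n * (n - 1))

/-- The degree of a node: the number of observed labels `≠ 0` on pairs containing it. -/
def degree {n L : ℕ} (E : Pairs n → Fin (L + 1)) (v : Fin n) : ℕ := eTot E v univ

/-- `Γ` is a valid trimming if it is obtained from `I` by removing `⌊n·exp(−n·p̃)⌋` nodes of
largest degrees. -/
def IsTrimming {n L : ℕ} (E : Pairs n → Fin (L + 1)) (Γ : Finset (Fin n)) : Prop :=
  Γ.card = n - Nat.floor ((n : ℝ) * Real.exp (-(n : ℝ) * ptilde E)) ∧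
  ∀ v ∈ Γ, ∀ w, w ∉ Γ → degree E v ≤ degree E w

/-!
Conditionally on `σ` the labels of distinct pairs are independent and a nonzero label has
probability at most `p̄`, so an exponential-moment (Chernoff) bound with tilt `1` shows that,
outside an event of probability `≤ 2 exp(-(C+1) n p̄)`, the estimate satisfies `p̃ ≤ L p̄` and
(by Markov's inequality for their number) fewer than `n exp(-L n p̄)` nodes have degree
above `c₁ n p̄`, where `c₁ = 3L + C + 1`. On that event a node `v ∈ Γ` with
`e(v, Γ) > c₁ n p̄` is impossible: all `⌊n exp(-n p̃)⌋ ≥ ⌊n exp(-L n p̄)⌋` trimmed nodes have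
degree at least that of `v`, which together with `v` gives too many high-degree nodes.
-/

section Counting

variable {n L : ℕ}

def edgeCount (E : Pairs n → Fin (L + 1)) (Q : Finset (Pairs n)) : ℕ := #{q ∈ Q | E q ≠ 0}

lemma exp_edgeCount (E : Pairs n → Fin (L + 1)) (Q : Finset (Pairs n)) :
    exp (edgeCount E Q) = ∏ q, if q ∈ Q ∧ E q ≠ 0 then exp 1 else 1 := by
  rw [edgeCount, natCast_card_filter, exp_sum, ← univ_inter Q, ← prod_ite_mem]
  exact prod_congr rfl fun q _ => by split_ifs <;> simp_all

lemma two_mul_card_pairs : 2 * Fintype.card (Pairs n) = n * (n - 1) := by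
  rw [Fintype.card_subtype, card_filter, Fintype.sum_prod_type_right]
  simp only [sum_boole, Nat.cast_id, filter_gt_eq_Iio, Fin.card_Iio]
  rw [Fin.sum_univ_eq_sum_range (fun i => i), mul_comm, sum_range_id_mul_two]

lemma ptilde_eq (E : Pairs n → Fin (L + 1)) :
    ptilde E = edgeCount E univ / (n * (n - 1)) := by
  rw [ptilde, edgeCount, natCast_card_filter, sum_comm]
  congr 1
  exact sum_congr rfl fun q _ => by simp [sum_ite_eq]

lemma ptilde_nonneg (E : Pairs n → Fin (L + 1)) : 0 ≤ ptilde E := by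
  rw [ptilde_eq]
  rcases n with _ | n
  · simp
  · push_cast
    rw [add_sub_cancel_right]
    positivity

def pairWith (v : Fin n) (w : {w // w ≠ v}) : Pairs n :=
  ⟨(min v w, max v w), min_lt_max.2 (Ne.symm w.2)⟩

lemma pairWith_injective (v : Fin n) : Function.Injective (pairWith v) := by
  rintro ⟨w, _⟩ ⟨w', _⟩ h
  simp only [pairWith, Subtype.mk.injEq, Prod.mk.injEq] at h
  obtain ⟨hmin, hmax⟩ := h
  rw [Fin.ext_iff, Fin.coe_min, Fin.coe_min] at hmin
  rw [Fin.ext_iff, Fin.coe_max, Fin.coe_max] at hmax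
  rw [Subtype.mk.injEq, Fin.ext_iff]
  omega

def incidentPairs (v : Fin n) : Finset (Pairs n) :=
  univ.map ⟨pairWith v, pairWith_injective v⟩

lemma card_incidentPairs_le (v : Fin n) : #(incidentPairs v) ≤ n := by
  simp [incidentPairs]

lemma Aobs_of_ne (E : Pairs n → Fin (L + 1)) (ℓ : Fin (L + 1)) (v : Fin n) (w : {w // w ≠ v}) :
    Aobs E ℓ v w = if E (pairWith v w) = ℓ then 1 else 0 := by
  obtain ⟨w, hw⟩ := w
  rcases lt_or_gt_of_ne (Ne.symm hw) with h | h
  · simp [Aobs, pairWith, h, min_eq_left h.le, max_eq_right h.le]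
  · simp [Aobs, pairWith, h, not_lt_of_gt h, min_eq_right h.le, max_eq_left h.le]

lemma degree_eq_edgeCount (E : Pairs n → Fin (L + 1)) (v : Fin n) :
    degree E v = edgeCount E (incidentPairs v) := by
  simp only [degree, eTot, eCnt]
  rw [sum_comm, Fintype.sum_eq_add_sum_subtype_ne _ v, edgeCount, card_filter, incidentPairs,
    sum_map]
  simp only [Aobs_of_ne]
  simp [Aobs, sum_ite_eq]

lemma eTot_le_degree (E : Pairs n → Fin (L + 1)) (v : Fin n) (S : Finset (Fin n)) :
    eTot E v S ≤ degree E v :=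
  sum_le_sum fun _ _ => sum_le_sum_of_subset (subset_univ S)

end Counting

section LSBM

variable {n K L : ℕ} {α : Fin K → ℝ} {P : Fin K → Fin K → Fin (L + 1) → ℝ}

lemma mass_nonneg (hα : ∀ k, 0 ≤ α k) (hP : ∀ i j ℓ, 0 ≤ P i j ℓ) (c : Config n K L) :
    0 ≤ mass α P c :=
  mul_nonneg (prod_nonneg fun _ _ => hα _) (prod_nonneg fun _ _ => hP _ _ _)

lemma Ex_prod_labels (G : Pairs n → Fin (L + 1) → ℝ) :
    Ex α P (fun c : Config n K L => ∏ q, G q (c.2 q)) =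
      ∑ σ : Fin n → Fin K, (∏ v, α (σ v)) *
        ∏ q : Pairs n, ∑ ℓ, P (σ q.1.1) (σ q.1.2) ℓ * G q ℓ := by
  simp only [Ex, mass, Fintype.sum_prod_type, prod_univ_sum, Fintype.piFinset_univ,
    mul_sum, mul_assoc, prod_mul_distrib]

lemma sum_prod_clusters (hαsum : ∑ k, α k = 1) : ∑ σ : Fin n → Fin K, ∏ v, α (σ v) = 1 := by
  rw [← Fintype.piFinset_univ, ← prod_univ_sum, hαsum, prod_const_one]

lemma Ex_prod_labels_le (hα : ∀ k, 0 ≤ α k) (hαsum : ∑ k, α k = 1)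
    (G : Pairs n → Fin (L + 1) → ℝ) (b : Pairs n → ℝ)
    (hG : ∀ i j q, 0 ≤ ∑ ℓ, P i j ℓ * G q ℓ) (hb : ∀ i j q, ∑ ℓ, P i j ℓ * G q ℓ ≤ b q) :
    Ex α P (fun c : Config n K L => ∏ q, G q (c.2 q)) ≤ ∏ q, b q := by
  rw [Ex_prod_labels]
  calc _ ≤ ∑ σ : Fin n → Fin K, (∏ v, α (σ v)) * ∏ q, b q := by
        gcongr with σ
        · exact prod_nonneg fun _ _ => hα _
        · exact fun q _ => hG _ _ _
        · exact hb _ _ _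
    _ = ∏ q, b q := by rw [← sum_mul, sum_prod_clusters hαsum, one_mul]

lemma sum_mass (hαsum : ∑ k, α k = 1) (hPsum : ∀ i j, ∑ ℓ, P i j ℓ = 1) :
    ∑ c : Config n K L, mass α P c = 1 := by
  have h := Ex_prod_labels (α := α) (P := P) (n := n) fun _ _ => 1
  simp only [Ex, prod_const_one, mul_one, hPsum] at h
  rw [h, sum_prod_clusters hαsum]

lemma Pr_mono (hα : ∀ k, 0 ≤ α k) (hP : ∀ i j ℓ, 0 ≤ P i j ℓ) {S T : Set (Config n K L)}
    (h : S ⊆ T) : Pr α P S ≤ Pr α P T :=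
  sum_le_sum fun _ _ => Set.indicator_le_indicator_of_subset h (mass_nonneg hα hP) _

lemma Pr_union_le (hα : ∀ k, 0 ≤ α k) (hP : ∀ i j ℓ, 0 ≤ P i j ℓ) (S T : Set (Config n K L)) :
    Pr α P (S ∪ T) ≤ Pr α P S + Pr α P T := by
  rw [Pr, Pr, Pr, ← sum_add_distrib]
  refine sum_le_sum fun c _ => ?_
  rw [← Set.indicator_union_add_inter_apply]
  exact le_add_of_nonneg_right (Set.indicator_nonneg (fun c _ => mass_nonneg hα hP c) c)

lemma Pr_eq_one_sub_Pr_compl (hαsum : ∑ k, α k = 1) (hPsum : ∀ i j, ∑ ℓ, P i j ℓ = 1)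
    (S : Set (Config n K L)) : Pr α P S = 1 - Pr α P Sᶜ := by
  rw [eq_sub_iff_add_eq, Pr, Pr, ← sum_add_distrib, ← sum_mass (n := n) hαsum hPsum]
  exact sum_congr rfl fun c _ => Set.indicator_self_add_compl_apply S _ c

lemma Pr_le_Ex_div (hα : ∀ k, 0 ≤ α k) (hP : ∀ i j ℓ, 0 ≤ P i j ℓ) (f : Config n K L → ℝ)
    (hf : ∀ c, 0 ≤ f c) {a : ℝ} (ha : 0 < a) : Pr α P {c | a ≤ f c} ≤ Ex α P f / a := by
  rw [le_div_iff₀ ha, Pr, Ex, sum_mul]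
  refine sum_le_sum fun c _ => ?_
  rw [Set.indicator_apply]
  split_ifs with hc
  · exact mul_le_mul_of_nonneg_left hc (mass_nonneg hα hP c)
  · rw [zero_mul]; exact mul_nonneg (mass_nonneg hα hP c) (hf c)

lemma Ex_card_filter {ι : Type*} [Fintype ι] (Q : ι → Config n K L → Prop)
    [∀ i, DecidablePred (Q i)] :
    Ex α P (fun c => (#{i | Q i c} : ℝ)) = ∑ i, Pr α P {c | Q i c} := by
  simp only [Ex, Pr, natCast_card_filter, mul_sum, Set.indicator_apply, Set.mem_ofPred_eq,
    mul_ite, mul_one, mul_zero]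
  exact sum_comm

end LSBM

section Concentration

variable {n K L : ℕ} {α : Fin K → ℝ} {P : Fin K → Fin K → Fin (L + 1) → ℝ}

lemma sum_mul_exp_label_le (r : Fin (L + 1) → ℝ) (hr : ∑ ℓ, r ℓ = 1) {pb : ℝ}
    (hpb : ∀ ℓ, ℓ ≠ 0 → r ℓ ≤ pb) :
    ∑ ℓ, r ℓ * (if ℓ ≠ 0 then exp 1 else 1) ≤ exp ((exp 1 - 1) * L * pb) := by
  rw [Fin.sum_univ_succ] at hr ⊢
  simp only [ne_eq, not_true_eq_false, if_false, mul_one, Fin.succ_ne_zero, not_false_eq_true,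
    if_true]
  have hsum : ∑ i : Fin L, r i.succ ≤ L * pb := by
    simpa using sum_le_sum fun i (_ : i ∈ univ) => hpb i.succ (Fin.succ_ne_zero i)
  have he : 1 ≤ exp 1 := one_le_exp zero_le_one
  calc r 0 + ∑ i : Fin L, r i.succ * exp 1 = 1 + (exp 1 - 1) * ∑ i : Fin L, r i.succ := by
        rw [← sum_mul]; linarith
    _ ≤ (exp 1 - 1) * L * pb + 1 := by nlinarith
    _ ≤ exp ((exp 1 - 1) * L * pb) := add_one_le_exp _

lemma Ex_exp_edgeCount_le (hα : ∀ k, 0 ≤ α k) (hαsum : ∑ k, α k = 1)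
    (hP : ∀ i j ℓ, 0 ≤ P i j ℓ) (hPsum : ∀ i j, ∑ ℓ, P i j ℓ = 1) {pb : ℝ}
    (hpb : ∀ i j ℓ, ℓ ≠ 0 → P i j ℓ ≤ pb) (Q : Finset (Pairs n)) :
    Ex α P (fun c : Config n K L => exp (edgeCount c.2 Q)) ≤
      exp ((exp 1 - 1) * L * pb * #Q) := by
  simp only [exp_edgeCount]
  have hbound := Ex_prod_labels_le (n := n) (P := P) hα hαsum
    (fun q ℓ => if q ∈ Q ∧ ℓ ≠ 0 then exp 1 else 1)
    (fun q => if q ∈ Q then exp ((exp 1 - 1) * L * pb) else 1) ?_ ?_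
  · rwa [prod_ite_mem, univ_inter, prod_const, ← exp_nat_mul, mul_comm] at hbound
  · intro i j q
    exact sum_nonneg fun ℓ _ => mul_nonneg (hP i j ℓ) (by split_ifs <;> positivity)
  · intro i j q
    split_ifs with hq
    · simpa [hq] using sum_mul_exp_label_le (P i j) (hPsum i j) (hpb i j)
    · simp [hq, hPsum]

lemma Pr_le_edgeCount_le (hα : ∀ k, 0 ≤ α k) (hαsum : ∑ k, α k = 1)
    (hP : ∀ i j ℓ, 0 ≤ P i j ℓ) (hPsum : ∀ i j, ∑ ℓ, P i j ℓ = 1) {pb : ℝ}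
    (hpb : ∀ i j ℓ, ℓ ≠ 0 → P i j ℓ ≤ pb) (Q : Finset (Pairs n)) (a : ℝ) :
    Pr α P {c : Config n K L | a ≤ edgeCount c.2 Q} ≤
      exp ((exp 1 - 1) * L * pb * #Q - a) := by
  simp_rw [← exp_le_exp (x := a)]
  calc _ ≤ Ex α P (fun c : Config n K L => exp (edgeCount c.2 Q)) / exp a :=
        Pr_le_Ex_div hα hP _ (fun _ => (exp_pos _).le) (exp_pos a)
    _ ≤ exp ((exp 1 - 1) * L * pb * #Q) / exp a := by
        gcongr; exact Ex_exp_edgeCount_le hα hαsum hP hPsum hpb Q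
    _ = _ := (exp_sub _ _).symm

end Concentration

section BoundedDegree

variable {n K L : ℕ} {α : Fin K → ℝ} {P : Fin K → Fin K → Fin (L + 1) → ℝ}

lemma Pr_lt_ptilde_le (hn : 2 ≤ n) (hα : ∀ k, 0 ≤ α k) (hαsum : ∑ k, α k = 1)
    (hP : ∀ i j ℓ, 0 ≤ P i j ℓ) (hPsum : ∀ i j, ∑ ℓ, P i j ℓ = 1) {pb : ℝ}
    (hpb : ∀ i j ℓ, ℓ ≠ 0 → P i j ℓ ≤ pb) :
    Pr α P {c : Config n K L | L * pb < ptilde c.2} ≤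
      exp (-((3 - exp 1) / 2 * L * pb * (n * (n - 1)))) := by
  have hN : (0 : ℝ) < n * (n - 1) := by
    have : (2 : ℝ) ≤ n := by exact_mod_cast hn
    nlinarith
  have hcard : (#(univ : Finset (Pairs n)) : ℝ) = n * (n - 1) / 2 := by
    rw [card_univ, eq_div_iff two_ne_zero, mul_comm, ← Nat.cast_ofNat, ← Nat.cast_mul,
      two_mul_card_pairs, Nat.cast_mul, Nat.cast_sub (by omega), Nat.cast_one]
  calc _ ≤ Pr α P {c : Config n K L | L * pb * (n * (n - 1)) ≤ edgeCount c.2 univ} := by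
        refine Pr_mono hα hP fun c hc => ?_
        rw [Set.mem_ofPred_eq, ptilde_eq, lt_div_iff₀ hN] at hc
        exact hc.le
    _ ≤ exp ((exp 1 - 1) * L * pb * #(univ : Finset (Pairs n)) - L * pb * (n * (n - 1))) :=
        Pr_le_edgeCount_le hα hαsum hP hPsum hpb univ _
    _ = _ := by rw [hcard]; ring_nf

lemma Pr_le_card_lt_degree_le (hα : ∀ k, 0 ≤ α k) (hαsum : ∑ k, α k = 1)
    (hP : ∀ i j ℓ, 0 ≤ P i j ℓ) (hPsum : ∀ i j, ∑ ℓ, P i j ℓ = 1) {pb : ℝ} (hpb0 : 0 ≤ pb)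
    (hpb : ∀ i j ℓ, ℓ ≠ 0 → P i j ℓ ≤ pb) (t : ℝ) {a : ℝ} (ha : 0 < a) :
    Pr α P {c : Config n K L | a ≤ #{w | t < degree c.2 w}} ≤
      n * exp ((exp 1 - 1) * L * pb * n - t) / a := by
  have hdeg : ∀ w : Fin n, Pr α P {c : Config n K L | t < degree c.2 w} ≤
      exp ((exp 1 - 1) * L * pb * n - t) := fun w =>
    calc _ ≤ Pr α P {c : Config n K L | t ≤ edgeCount c.2 (incidentPairs w)} :=
          Pr_mono hα hP fun c hc => by
            rw [Set.mem_ofPred_eq, degree_eq_edgeCount] at hc; exact hc.le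
      _ ≤ exp ((exp 1 - 1) * L * pb * #(incidentPairs w) - t) :=
          Pr_le_edgeCount_le hα hαsum hP hPsum hpb _ t
      _ ≤ _ := by
          have : 0 ≤ exp 1 - 1 := by linarith [one_le_exp zero_le_one]
          gcongr; exact_mod_cast card_incidentPairs_le w
  calc _ ≤ Ex α P (fun c : Config n K L => (#{w | t < degree c.2 w} : ℝ)) / a :=
        Pr_le_Ex_div hα hP _ (fun _ => Nat.cast_nonneg _) ha
    _ ≤ _ := by
        rw [Ex_card_filter]
        gcongr
        simpa using sum_le_sum fun w (_ : w ∈ univ) => hdeg w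

lemma IsTrimming.lt_card_lt_degree {E : Pairs n → Fin (L + 1)} {Γ : Finset (Fin n)}
    (hΓ : IsTrimming E Γ) {v : Fin n} (hv : v ∈ Γ) {t : ℝ} (ht : t < degree E v) :
    n * exp (-n * ptilde E) < #{w | t < degree E w} := by
  set m := ⌊(n : ℝ) * exp (-n * ptilde E)⌋₊
  have hmn : m ≤ n := Nat.floor_le_of_le <| mul_le_of_le_one_right (Nat.cast_nonneg n) <|
    exp_le_one_iff.2 <| by nlinarith [ptilde_nonneg E, (Nat.cast_nonneg n : (0 : ℝ) ≤ n)]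
  have hcompl : #Γᶜ = m := by rw [card_compl, hΓ.1, Fintype.card_fin]; omega
  have hsub : insert v Γᶜ ⊆ ({w | t < degree E w} : Finset (Fin n)) := by
    intro w hw
    rcases mem_insert.1 hw with rfl | hw
    · simpa using ht
    · simpa using ht.trans_le (Nat.cast_le.2 (hΓ.2 v hv w (mem_compl.1 hw)))
  calc (n : ℝ) * exp (-n * ptilde E) < m + 1 := Nat.lt_floor_add_one _
    _ = #(insert v Γᶜ) := by
        rw [card_insert_of_notMem (by simpa using hv), hcompl, Nat.cast_succ]
    _ ≤ _ := by exact_mod_cast card_le_card hsub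

lemma one_sub_le_Pr_forall_eTot_le (hn : 2 ≤ n) (hα : ∀ k, 0 ≤ α k) (hαsum : ∑ k, α k = 1)
    (hP : ∀ i j ℓ, 0 ≤ P i j ℓ) (hPsum : ∀ i j, ∑ ℓ, P i j ℓ = 1) {pb : ℝ} (hpb0 : 0 ≤ pb)
    (hpb : ∀ i j ℓ, ℓ ≠ 0 → P i j ℓ ≤ pb) (Γ : (Pairs n → Fin (L + 1)) → Finset (Fin n))
    (hΓ : ∀ E, IsTrimming E (Γ E)) (s : ℝ) :
    1 - (exp (-((3 - exp 1) / 2 * L * pb * (n * (n - 1)))) + exp (exp 1 * L * (n * pb) - s)) ≤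
      Pr α P {c : Config n K L | ∀ v ∈ Γ c.2, (eTot c.2 v (Γ c.2) : ℝ) ≤ s} := by
  have hnpos : (0 : ℝ) < n := by exact_mod_cast (by omega : 0 < n)
  set a : ℝ := n * exp (-(L * (n * pb)))
  have hbad : {c : Config n K L | ∀ v ∈ Γ c.2, (eTot c.2 v (Γ c.2) : ℝ) ≤ s}ᶜ ⊆
      {c | L * pb < ptilde c.2} ∪ {c | a ≤ #{w | s < degree c.2 w}} := by
    intro c hc
    simp only [Set.mem_compl_iff, Set.mem_ofPred_eq, not_forall, not_le] at hc
    obtain ⟨v, hv, hsv⟩ := hc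
    rcases lt_or_ge (L * pb) (ptilde c.2) with hp | hp
    · exact Or.inl hp
    · refine Or.inr (le_trans ?_ ((hΓ c.2).lt_card_lt_degree hv
        (hsv.trans_le (Nat.cast_le.2 (eTot_le_degree _ _ _)))).le)
      exact mul_le_mul_of_nonneg_left (exp_le_exp.2 (by nlinarith)) hnpos.le
  have hmany : Pr α P {c : Config n K L | a ≤ #{w | s < degree c.2 w}} ≤
      exp (exp 1 * L * (n * pb) - s) :=
    calc _ ≤ n * exp ((exp 1 - 1) * L * pb * n - s) / a :=
          Pr_le_card_lt_degree_le hα hαsum hP hPsum hpb0 hpb s (by positivity)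
      _ = _ := by
          rw [mul_div_mul_left _ _ hnpos.ne', ← exp_sub]
          ring_nf
  rw [Pr_eq_one_sub_Pr_compl hαsum hPsum]
  have := (Pr_mono hα hP hbad).trans ((Pr_union_le hα hP _ _).trans
    (add_le_add (Pr_lt_ptilde_le hn hα hαsum hP hPsum hpb) hmany))
  linarith

end BoundedDegree

lemma two_mul_exp_le_exp (C : ℝ) {x : ℝ} (hx : log 2 ≤ x) :
    2 * exp (-(C + 1) * x) ≤ exp (-C * x) := by
  have h2 : 2 ≤ exp x := by simpa [exp_log] using exp_le_exp.2 hx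
  have : exp (-C * x) = exp (-(C + 1) * x) * exp x := by rw [← exp_add]; ring_nf
  rw [this]
  nlinarith [exp_pos (-(C + 1) * x)]

theorem statement15_general
    (K L : ℕ) (hL : 1 ≤ L)
    (α : Fin K → ℝ) (hαpos : ∀ k, 0 < α k) (hαsum : ∑ k, α k = 1)
    (p : ℕ → Fin K → Fin K → Fin (L + 1) → ℝ)
    (hp0 : ∀ n i j ℓ, 0 ≤ p n i j ℓ)
    (hpsum : ∀ n i j, ∑ ℓ, p n i j ℓ = 1)
    (pbar : ℕ → ℝ)
    (hpbar : ∀ n, IsGreatest {x | ∃ i j, ∃ ℓ : Fin (L + 1), ℓ ≠ 0 ∧ x = p n i j ℓ} (pbar n))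
    (hgrow : Tendsto (fun n : ℕ => (n : ℝ) * pbar n) atTop atTop)
    (Γsel : (n : ℕ) → (Pairs n → Fin (L + 1)) → Finset (Fin n))
    (hΓ : ∀ (n : ℕ) (E : Pairs n → Fin (L + 1)), IsTrimming E (Γsel n E))
    (C : ℝ) (hC : 0 < C) :
    ∃ c₁ : ℝ, 0 < c₁ ∧
      ∀ᶠ n : ℕ in atTop,
        1 - Real.exp (-C * ((n : ℝ) * pbar n)) ≤
          Pr α (p n) {c : Config n K L |
            ∀ v ∈ Γsel n c.2, (eTot c.2 v (Γsel n c.2) : ℝ) ≤ c₁ * ((n : ℝ) * pbar n)} := by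
  have hL' : (0 : ℝ) < L := by exact_mod_cast hL
  have he3 : exp 1 < 3 := by linarith [exp_one_lt_d9]
  have hgap : Tendsto (fun n : ℕ => (3 - exp 1) / 2 * L * ((n : ℝ) - 1)) atTop atTop :=
    (tendsto_atTop_add_const_right _ _ tendsto_natCast_atTop_atTop).const_mul_atTop
      (by nlinarith)
  refine ⟨3 * L + C + 1, by positivity, ?_⟩
  filter_upwards [hgrow.eventually_ge_atTop (log 2), eventually_ge_atTop 2,
    hgap.eventually_ge_atTop (C + 1)] with n hlog hn hgapn
  obtain ⟨⟨i, j, ℓ, -, hpb⟩, hub⟩ := hpbar n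
  have hpb0 : 0 ≤ pbar n := hpb ▸ hp0 n i j ℓ
  have hPr := one_sub_le_Pr_forall_eTot_le hn (fun k => (hαpos k).le) hαsum (hp0 n) (hpsum n)
    hpb0 (fun i j ℓ hℓ => hub ⟨i, j, ℓ, hℓ, rfl⟩) (Γsel n) (hΓ n) ((3 * L + C + 1) * (n * pbar n))
  have hnpb : 0 ≤ (n : ℝ) * pbar n := by positivity
  have h1 : exp (-((3 - exp 1) / 2 * L * pbar n * (n * (n - 1)))) ≤
      exp (-(C + 1) * (n * pbar n)) :=
    exp_le_exp.2 (by nlinarith)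
  have h2 : exp (exp 1 * L * (n * pbar n) - (3 * L + C + 1) * (n * pbar n)) ≤
      exp (-(C + 1) * (n * pbar n)) :=
    exp_le_exp.2 (by nlinarith [mul_nonneg (mul_nonneg (sub_nonneg.2 he3.le) hL'.le) hnpb])
  linarith [two_mul_exp_le_exp C hlog]

/-- **Lemma E.1 (bounded degree property after trimming).** Under (A1), `p̄ = O(log n/n)`,
`n·p̄ → ∞`, for any `C > 0` there is `c₁ > 0` such that for all large `n`, with probability at
least `1 − exp(−C·n·p̄)`, every node `v ∈ Γ` satisfies `e(v, I ∩ Γ) ≤ c₁·n·p̄`. -/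
theorem statement15
    (K L : ℕ) (hK : 2 ≤ K) (hL : 1 ≤ L)
    (α : Fin K → ℝ) (hαpos : ∀ k, 0 < α k) (hαsum : ∑ k, α k = 1)
    (p : ℕ → Fin K → Fin K → Fin (L + 1) → ℝ)
    (hp0 : ∀ n i j ℓ, 0 ≤ p n i j ℓ) (hp1 : ∀ n i j ℓ, p n i j ℓ ≤ 1)
    (hpsym : ∀ n i j ℓ, p n i j ℓ = p n j i ℓ)
    (hpsum : ∀ n i j, ∑ ℓ, p n i j ℓ = 1)
    (pbar : ℕ → ℝ)
    (hpbar : ∀ n, IsGreatest {x | ∃ i j, ∃ ℓ : Fin (L + 1), ℓ ≠ 0 ∧ x = p n i j ℓ} (pbar n))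
    (η : ℝ) (hη : 0 < η)
    (hA1 : ∀ n i j k ℓ, p n i j ℓ ≤ η * p n i k ℓ)
    (hO : (fun n => pbar n) =O[atTop] (fun n : ℕ => Real.log n / n))
    (hgrow : Tendsto (fun n : ℕ => (n : ℝ) * pbar n) atTop atTop)
    (Γsel : (n : ℕ) → (Pairs n → Fin (L + 1)) → Finset (Fin n))
    (hΓ : ∀ (n : ℕ) (E : Pairs n → Fin (L + 1)), IsTrimming E (Γsel n E))
    (C : ℝ) (hC : 0 < C) :
    ∃ c₁ : ℝ, 0 < c₁ ∧
      ∀ᶠ n : ℕ in atTop,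
        1 - Real.exp (-C * ((n : ℝ) * pbar n)) ≤
          Pr α (p n) {c : Config n K L |
            ∀ v ∈ Γsel n c.2, (eTot c.2 v (Γsel n c.2) : ℝ) ≤ c₁ * ((n : ℝ) * pbar n)} :=
  statement15_general K L hL α hαpos hαsum p hp0 hpsum pbar hpbar hgrow Γsel hΓ C hC
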